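/- Let E be a symmetric n×n matrix with at most αn nonzeros per row/column, and U* an n×r matrix with orthonormal columns whose rows have norm at most μ√r/√n. Then for any n×n matrix B and integers p, q ≥ 0, max_{i,j} |eᵢᵀ Eᵖ U* (U*)ᵀ B U* (U*)ᵀ E^q e_j| ≤ (μ²r/n) (αn‖E‖_∞)^{p+q} ‖U*(U*)ᵀ B U*(U*)ᵀ‖₂. -/

import Mathlib

open Matrix

/-- The spectral (operator) norm of a real matrix. -/
noncomputable def specNorm {m n : Type*} [Fintype m] [Fintype n] [DecidableEq n]
    (A : Matrix m n ℝ) : ℝ :=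
  ‖LinearMap.toContinuousLinearMap (Matrix.toEuclideanLin A)‖

/-- The maximum absolute value of the entries of a matrix. -/
noncomputable def maxEntry {m n : Type*} [Fintype m] [Fintype n]
    (A : Matrix m n ℝ) : ℝ := ⨆ i, ⨆ j, |A i j|

/-!
Factor `Eᵖ (U Uᵀ B U Uᵀ) E^q = (Eᵖ U) (Uᵀ M U) (E^q U)ᵀ` with `M = U Uᵀ B U Uᵀ`, using `Uᵀ U = 1`
and the symmetry of `E`. An entry of the right-hand side is the bilinear form of `Uᵀ M U`
evaluated at a row of `Eᵖ U` and a row of `E^q U`, so by Cauchy–Schwarz it is at most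
`‖Uᵀ M U‖₂ ≤ ‖M‖₂` times the two row norms. A row of `E X` is a combination of at most `α n` rows
of `X` with coefficients bounded by `‖E‖_∞`, so each multiplication by `E` inflates the largest row
norm by at most `α n ‖E‖_∞`; the rows of `U` start at `μ √r / √n`.
-/

open scoped Matrix.Norms.L2Operator

lemma specNorm_eq_l2_opNorm {m n : Type*} [Fintype m] [Fintype n] [DecidableEq n]
    (A : Matrix m n ℝ) : specNorm A = ‖A‖ := rfl

section maxEntry

variable {m n : Type*} [Fintype m] [Fintype n]

lemma abs_le_maxEntry (A : Matrix m n ℝ) (i : m) (j : n) : |A i j| ≤ maxEntry A :=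
  (le_ciSup (Set.finite_range _).bddAbove j).trans
    (le_ciSup (f := fun i => ⨆ j, |A i j|) (Set.finite_range _).bddAbove i)

lemma maxEntry_nonneg (A : Matrix m n ℝ) : 0 ≤ maxEntry A :=
  Real.iSup_nonneg fun _ => Real.iSup_nonneg fun _ => abs_nonneg _

end maxEntry

section RowNorms

variable {l m k : Type*} [Fintype m]

lemma EuclideanSpace.norm_toLp_eq_sqrt_sum_sq [Fintype k] (v : k → ℝ) :
    ‖WithLp.toLp 2 v‖ = √(∑ i, v i ^ 2) := by
  simp [EuclideanSpace.norm_eq]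

lemma toLp_mul_apply (A : Matrix l m ℝ) (X : Matrix m k ℝ) (a : l) :
    WithLp.toLp 2 ((A * X) a) = ∑ b, A a b • WithLp.toLp 2 (X b) := by
  ext i
  simp [Matrix.mul_apply]

lemma norm_toLp_mul_apply_le [Fintype k] {A : Matrix l m ℝ} {X : Matrix m k ℝ} {a : l} {s c β : ℝ}
    (hc : 0 ≤ c) (hβ : 0 ≤ β) (hA : ∀ b, |A a b| ≤ c)
    (hsupp : (({b | A a b ≠ 0} : Set m).ncard : ℝ) ≤ s) (hX : ∀ b, ‖WithLp.toLp 2 (X b)‖ ≤ β) :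
    ‖WithLp.toLp 2 ((A * X) a)‖ ≤ s * c * β := by
  classical
  set S := Finset.univ.filter fun b => A a b ≠ 0
  have hS : (S.card : ℝ) ≤ s := by
    rwa [Set.ncard_eq_toFinset_card', Set.toFinset_ofPred] at hsupp
  rw [toLp_mul_apply]
  calc ‖∑ b, A a b • WithLp.toLp 2 (X b)‖
      ≤ ∑ b, |A a b| * ‖WithLp.toLp 2 (X b)‖ := by
        refine (norm_sum_le _ _).trans_eq (Finset.sum_congr rfl fun b _ => ?_)
        rw [norm_smul, Real.norm_eq_abs]
    _ = ∑ b ∈ S, |A a b| * ‖WithLp.toLp 2 (X b)‖ := by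
        refine (Finset.sum_filter_of_ne (p := fun b => A a b ≠ 0) fun b _ hb h0 => hb ?_).symm
        rw [h0, abs_zero, zero_mul]
    _ ≤ ∑ _b ∈ S, c * β := Finset.sum_le_sum fun b _ => mul_le_mul (hA b) (hX b) (norm_nonneg _) hc
    _ = S.card * (c * β) := by rw [Finset.sum_const, nsmul_eq_mul]
    _ ≤ s * c * β := by rw [mul_assoc]; exact mul_le_mul_of_nonneg_right hS (mul_nonneg hc hβ)

lemma norm_toLp_pow_mul_apply_le [Fintype k] [DecidableEq m] {E : Matrix m m ℝ} {X : Matrix m k ℝ}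
    {s c β : ℝ} (hc : 0 ≤ c) (hβ : 0 ≤ β) (hE : ∀ a b, |E a b| ≤ c)
    (hsupp : ∀ a, (({b | E a b ≠ 0} : Set m).ncard : ℝ) ≤ s)
    (hX : ∀ b, ‖WithLp.toLp 2 (X b)‖ ≤ β) (p : ℕ) (a : m) :
    ‖WithLp.toLp 2 ((E ^ p * X) a)‖ ≤ β * (s * c) ^ p := by
  induction p generalizing a with
  | zero => simpa using hX a
  | succ p ih =>
    have hs : 0 ≤ s := (Nat.cast_nonneg _).trans (hsupp a)
    rw [pow_succ', Matrix.mul_assoc]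
    calc ‖WithLp.toLp 2 ((E * (E ^ p * X)) a)‖
        ≤ s * c * (β * (s * c) ^ p) :=
          norm_toLp_mul_apply_le hc (by positivity) (hE a) (hsupp a) ih
      _ = β * (s * c) ^ (p + 1) := by ring

end RowNorms

section BilinearForm

variable {m n k k' : Type*} [Fintype k] [Fintype k']

lemma mul_mul_transpose_apply_eq_inner (X : Matrix m k ℝ) (C : Matrix k k' ℝ)
    (Y : Matrix n k' ℝ) (i : m) (j : n) :
    (X * C * Yᵀ) i j = inner ℝ (WithLp.toLp 2 (X i)) (WithLp.toLp 2 (C *ᵥ Y j)) := by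
  simp only [EuclideanSpace.inner_toLp_toLp, Matrix.mul_apply, transpose_apply, dotProduct,
    mulVec, star_trivial, Finset.sum_mul]
  rw [Finset.sum_comm]
  exact Finset.sum_congr rfl fun _ _ => Finset.sum_congr rfl fun _ _ => by ring

lemma abs_mul_mul_transpose_apply_le [DecidableEq k'] (X : Matrix m k ℝ) (C : Matrix k k' ℝ)
    (Y : Matrix n k' ℝ) (i : m) (j : n) :
    |(X * C * Yᵀ) i j| ≤ ‖C‖ * ‖WithLp.toLp 2 (X i)‖ * ‖WithLp.toLp 2 (Y j)‖ := by
  rw [mul_mul_transpose_apply_eq_inner]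
  calc _ ≤ ‖WithLp.toLp 2 (X i)‖ * ‖WithLp.toLp 2 (C *ᵥ Y j)‖ := abs_real_inner_le_norm _ _
    _ ≤ ‖WithLp.toLp 2 (X i)‖ * (‖C‖ * ‖WithLp.toLp 2 (Y j)‖) :=
        mul_le_mul_of_nonneg_left (C.l2_opNorm_mulVec (WithLp.toLp 2 (Y j))) (norm_nonneg _)
    _ = _ := by ring

end BilinearForm

section Isometry

variable {m k : Type*} [Fintype m] [Fintype k] [DecidableEq k]

lemma l2_opNorm_one_le : ‖(1 : Matrix k k ℝ)‖ ≤ 1 := by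
  rw [← l2_opNorm_toEuclideanCLM, map_one]
  exact ContinuousLinearMap.norm_id_le

lemma l2_opNorm_le_one_of_transpose_mul_self_eq_one {U : Matrix m k ℝ} (hU : Uᵀ * U = 1) :
    ‖U‖ ≤ 1 := by
  have h := U.l2_opNorm_conjTranspose_mul_self
  rw [conjTranspose_eq_transpose_of_trivial, hU] at h
  nlinarith [norm_nonneg U, l2_opNorm_one_le (k := k)]

lemma l2_opNorm_transpose_mul_mul_le [DecidableEq m] {U : Matrix m k ℝ} (hU : ‖U‖ ≤ 1) (M : Matrix m m ℝ) :
    ‖Uᵀ * M * U‖ ≤ ‖M‖ := by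
  have hUt : ‖Uᵀ‖ ≤ 1 := by
    rwa [← conjTranspose_eq_transpose_of_trivial, l2_opNorm_conjTranspose]
  calc ‖Uᵀ * M * U‖ ≤ ‖Uᵀ‖ * ‖M‖ * ‖U‖ :=
        (l2_opNorm_mul _ _).trans (mul_le_mul_of_nonneg_right (l2_opNorm_mul _ _) (norm_nonneg _))
    _ ≤ 1 * ‖M‖ * 1 := by gcongr
    _ = ‖M‖ := by ring

end Isometry

theorem sandwiched_entry_bound_general {n r : ℕ}
    (E B : Matrix (Fin n) (Fin n) ℝ) (U : Matrix (Fin n) (Fin r) ℝ) (α μ : ℝ)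
    (hsym : Eᵀ = E)
    (hrowE : ∀ i, (({j | E i j ≠ 0} : Set (Fin n)).ncard : ℝ) ≤ α * n)
    (horth : Uᵀ * U = 1)
    (hinc : ∀ i, Real.sqrt (∑ k, (U i k) ^ 2) ≤ μ * Real.sqrt r / Real.sqrt n) :
    ∀ (p q : ℕ) (i j : Fin n),
      |(E ^ p * (U * Uᵀ * B * U * Uᵀ) * E ^ q) i j| ≤
        (μ ^ 2 * r / n) * (α * n * maxEntry E) ^ (p + q) *
          specNorm (U * Uᵀ * B * U * Uᵀ) := by
  intro p q i j
  set M := U * Uᵀ * B * U * Uᵀ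
  set β := μ * Real.sqrt r / Real.sqrt n
  have hfactor : E ^ p * M * E ^ q = (E ^ p * U) * (Uᵀ * M * U) * (E ^ q * U)ᵀ := by
    have hcore : Uᵀ * M * U = Uᵀ * B * U :=
      calc Uᵀ * M * U = (Uᵀ * U) * Uᵀ * B * U * (Uᵀ * U) := by simp only [M, Matrix.mul_assoc]
        _ = Uᵀ * B * U := by rw [horth, Matrix.one_mul, Matrix.mul_one]
    rw [hcore, transpose_mul, transpose_pow, hsym]
    simp only [M, Matrix.mul_assoc]
  have hβ : 0 ≤ β := (Real.sqrt_nonneg _).trans (hinc i)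
  have hrows : ∀ p a, ‖WithLp.toLp 2 ((E ^ p * U) a)‖ ≤ β * (α * n * maxEntry E) ^ p :=
    norm_toLp_pow_mul_apply_le (maxEntry_nonneg E) hβ (abs_le_maxEntry E) hrowE
      fun a => (EuclideanSpace.norm_toLp_eq_sqrt_sum_sq _).trans_le (hinc a)
  have hβsq : β ^ 2 = μ ^ 2 * r / n := by
    rw [div_pow, mul_pow, Real.sq_sqrt (Nat.cast_nonneg _), Real.sq_sqrt (Nat.cast_nonneg _)]
  have hcompress : ‖Uᵀ * M * U‖ ≤ ‖M‖ :=
    l2_opNorm_transpose_mul_mul_le (l2_opNorm_le_one_of_transpose_mul_self_eq_one horth) M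
  calc |(E ^ p * M * E ^ q) i j|
      ≤ ‖Uᵀ * M * U‖ * ‖WithLp.toLp 2 ((E ^ p * U) i)‖ * ‖WithLp.toLp 2 ((E ^ q * U) j)‖ := by
        rw [hfactor]; exact abs_mul_mul_transpose_apply_le _ _ _ i j
    _ ≤ ‖M‖ * (β * (α * n * maxEntry E) ^ p) * (β * (α * n * maxEntry E) ^ q) :=
        mul_le_mul (mul_le_mul hcompress (hrows p i) (norm_nonneg _) (norm_nonneg _)) (hrows q j)
          (norm_nonneg _) (mul_nonneg (norm_nonneg _) ((norm_nonneg _).trans (hrows p i)))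
    _ = (μ ^ 2 * r / n) * (α * n * maxEntry E) ^ (p + q) * specNorm M := by
        rw [specNorm_eq_l2_opNorm, pow_add, ← hβsq]; ring

/-- Entrywise bound for sandwiched powers of a sparse symmetric matrix:
if `E` is symmetric with at most `α n` nonzeros per row/column and `U` has
orthonormal columns with incoherent rows (norm at most `μ√r/√n`), then for all
`p, q ≥ 0` and all `i, j`,
`|eᵢᵀ Eᵖ U Uᵀ B U Uᵀ E^q eⱼ| ≤ (μ²r/n)(αn‖E‖_∞)^{p+q} ‖U Uᵀ B U Uᵀ‖₂`. -/
theorem sandwiched_entry_bound {n r : ℕ}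
    (E B : Matrix (Fin n) (Fin n) ℝ) (U : Matrix (Fin n) (Fin r) ℝ) (α μ : ℝ)
    (hsym : Eᵀ = E)
    (hrowE : ∀ i, (({j | E i j ≠ 0} : Set (Fin n)).ncard : ℝ) ≤ α * n)
    (hcolE : ∀ j, (({i | E i j ≠ 0} : Set (Fin n)).ncard : ℝ) ≤ α * n)
    (horth : Uᵀ * U = 1)
    (hinc : ∀ i, Real.sqrt (∑ k, (U i k) ^ 2) ≤ μ * Real.sqrt r / Real.sqrt n) :
    ∀ (p q : ℕ) (i j : Fin n),
      |(E ^ p * (U * Uᵀ * B * U * Uᵀ) * E ^ q) i j| ≤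
        (μ ^ 2 * r / n) * (α * n * maxEntry E) ^ (p + q) *
          specNorm (U * Uᵀ * B * U * Uᵀ) :=
  sandwiched_entry_bound_general E B U α μ hsym hrowE horth hinc
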